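/- arXiv:math/0611185 — 3 statements merged into one kernel-verified Lean document; each statement's English description precedes it below -/
import Mathlib

section
/- Let E, H ∈ C^∞ be a time-harmonic solution of Maxwell's equations on ℝ³ with ∇×E = ikH, ∇×H = −ikE + J, where k ≠ 0 and J is smooth and compactly supported, and suppose E and H vanish identically outside a bounded set N₂. Then for every point y ∉ supp(E) ∪ supp(H) and every constant vector a ∈ ℝ³, the source J is L²-orthogonal to the electric Green's function G_e(·, y, k; a) of the free-space Maxwell system. -/
open MeasureTheory Filter

/-- The Levi-Civita permutation symbol on three indices. -/
noncomputable def levi (l p q : Fin 3) : ℝ :=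
  (((p:ℕ):ℝ) - ((l:ℕ):ℝ)) * (((q:ℕ):ℝ) - ((l:ℕ):ℝ)) * (((q:ℕ):ℝ) - ((p:ℕ):ℝ)) / 2

/-- Partial derivative of a complex-valued function on ℝ³. -/
noncomputable def pderivC (j : Fin 3) (f : (Fin 3 → ℝ) → ℂ) (x : Fin 3 → ℝ) : ℂ :=
  fderiv ℝ f x (Pi.single j 1)

/-- The curl `(curl H)^l = s^{lpq} ∂_p H_q`. -/
noncomputable def curlC (H : (Fin 3 → ℝ) → Fin 3 → ℂ) (l : Fin 3) (x : Fin 3 → ℝ) : ℂ :=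
  ∑ p, ∑ q, (levi l p q : ℂ) * pderivC p (fun y => H y q) x

lemma triple_swap (f : Fin 3 → Fin 3 → Fin 3 → ℂ) :
    ∑ l, ∑ p, ∑ q, (levi l p q : ℂ) * f l p q
      = -∑ l, ∑ p, ∑ q, (levi l p q : ℂ) * f q p l := by
  simp only [Fin.sum_univ_three, levi]
  norm_num
  ring

lemma mul_int {u φ : (Fin 3 → ℝ) → ℂ} (hu : LocallyIntegrable u volume)
    (hφ : Continuous φ) (hφc : HasCompactSupport φ) :
    Integrable (fun x => u x * φ x) volume := by
  have hK : IsCompact (tsupport φ) := hφc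
  have heq : (tsupport φ).indicator (fun x => u x * φ x) = fun x => u x * φ x := by
    apply Set.indicator_eq_self.2
    apply Function.support_subset_iff'.2
    intro x hx
    simp [image_eq_zero_of_notMem_tsupport hx]
  rw [← heq, integrable_indicator_iff hK.measurableSet]
  obtain ⟨C, hC⟩ := hφ.bounded_above_of_compact_support hφc
  have hui : IntegrableOn u (tsupport φ) volume := hu.integrableOn_isCompact hK
  exact (Integrable.bdd_mul (c := C) hui (hφ.aestronglyMeasurable.restrict)
    (Filter.Eventually.of_forall fun x => hC x)).congr
      (Filter.Eventually.of_forall fun x => (mul_comm _ _))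

lemma mul_int' {u φ : (Fin 3 → ℝ) → ℂ} (hu : LocallyIntegrable u volume)
    (hφ : Continuous φ) (hφc : HasCompactSupport φ) :
    Integrable (fun x => φ x * u x) volume := by
  have h := mul_int hu hφ hφc
  have he : (fun x => φ x * u x) = fun x => u x * φ x := funext fun x => mul_comm _ _
  rw [he]; exact h

lemma integral_pderiv_eq_zero {f : (Fin 3 → ℝ) → ℂ} (hd : Differentiable ℝ f)
    (hc : Continuous (fderiv ℝ f)) (hs : HasCompactSupport f) (p : Fin 3) :
    ∫ x, fderiv ℝ f x (Pi.single p 1) = 0 := by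
  obtain ⟨R0, hR0⟩ := hs.isBounded.subset_closedBall 0
  set R : ℝ := |R0| with hRdef
  have hR : tsupport f ⊆ Metric.closedBall 0 R :=
    hR0.trans (Metric.closedBall_subset_closedBall (le_abs_self _))
  set a : Fin 3 → ℝ := fun _ => -(R + 1)
  set b : Fin 3 → ℝ := fun _ => R + 1
  have hRnn : (0:ℝ) ≤ R := abs_nonneg _
  have hle : a ≤ b := fun i => by simp only [a, b]; linarith
  have hout : ∀ z : Fin 3 → ℝ, R < ‖z‖ → f z = 0 := by
    intro z hz
    apply image_eq_zero_of_notMem_tsupport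
    intro hzK
    have := hR hzK
    rw [Metric.mem_closedBall, dist_zero_right] at this
    linarith
  have houtD : ∀ z : Fin 3 → ℝ, z ∉ Set.Icc a b → fderiv ℝ f z = 0 := by
    intro z hz
    by_contra h
    have hzsupp : z ∈ tsupport f := support_fderiv_subset ℝ (Function.mem_support.2 h)
    have hznorm : ‖z‖ ≤ R := by
      have := hR hzsupp
      rwa [Metric.mem_closedBall, dist_zero_right] at this
    apply hz
    constructor <;> intro i <;> simp only [a, b]
    · have := abs_le.1 ((norm_le_pi_norm z i).trans hznorm)
      · linarith [this.1]
    · have := abs_le.1 ((norm_le_pi_norm z i).trans hznorm)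
      · linarith [this.2]
  have hred : ∫ x, fderiv ℝ f x (Pi.single p 1)
      = ∫ x in Set.Icc a b, fderiv ℝ f x (Pi.single p 1) := by
    refine (setIntegral_eq_integral_of_forall_compl_eq_zero fun x hx => ?_).symm
    rw [houtD x hx]
    rfl
  rw [hred]
  set F : Fin 3 → (Fin 3 → ℝ) → ℂ := fun i => if i = p then f else fun _ => 0 with hF
  set F' : Fin 3 → (Fin 3 → ℝ) → (Fin 3 → ℝ) →L[ℝ] ℂ :=
    fun i x => if i = p then fderiv ℝ f x else 0 with hF'
  have hsum : ∀ x, (∑ i, F' i x (Pi.single i 1)) = fderiv ℝ f x (Pi.single p 1) := by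
    intro x
    rw [Finset.sum_eq_single p]
    · simp [F']
    · intro i _ hip; simp [F', hip]
    · simp
  have key := MeasureTheory.integral_divergence_of_hasFDerivAt_off_countable' (n := 2)
    a b hle F F' ∅ Set.countable_empty
    (fun i => by
      rcases eq_or_ne i p with h | h
      · simp only [F, h, if_pos rfl]; exact hd.continuous.continuousOn
      · simp only [F, if_neg h]; exact continuousOn_const)
    (fun x _ i => by
      rcases eq_or_ne i p with h | h
      · simp only [F, F', h, if_pos rfl]; exact (hd x).hasFDerivAt
      · simp only [F, F', if_neg h]; exact hasFDerivAt_const 0 x)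
    (by
      apply (ContinuousOn.integrableOn_compact isCompact_Icc)
      have : Continuous fun x => fderiv ℝ f x (Pi.single p 1) :=
        (ContinuousLinearMap.apply ℝ ℂ (Pi.single p 1)).continuous.comp hc
      exact (this.congr (fun x => (hsum x).symm)).continuousOn)
  have hfront : ∀ (i : Fin 3) (x : Fin 2 → ℝ), F i (Fin.insertNth i (b i) x) = 0 := by
    intro i x
    rcases eq_or_ne i p with h | h
    · subst h
      simp only [F, if_pos rfl]
      apply hout
      set z : Fin 3 → ℝ := Fin.insertNth i (b i) x with hz
      have h1 : ‖z i‖ ≤ ‖z‖ := norm_le_pi_norm z i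
      have h2 : z i = R + 1 := by rw [hz]; rw [Fin.insertNth_apply_same]
      rw [Real.norm_eq_abs, h2] at h1
      have := (abs_of_nonneg (by linarith : (0:ℝ) ≤ R + 1))
      rw [this] at h1; linarith
    · simp [F, h]
  have hback : ∀ (i : Fin 3) (x : Fin 2 → ℝ), F i (Fin.insertNth i (a i) x) = 0 := by
    intro i x
    rcases eq_or_ne i p with h | h
    · subst h
      simp only [F, if_pos rfl]
      apply hout
      set z : Fin 3 → ℝ := Fin.insertNth i (a i) x with hz
      have h1 : ‖z i‖ ≤ ‖z‖ := norm_le_pi_norm z i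
      have h2 : z i = -(R + 1) := by rw [hz]; rw [Fin.insertNth_apply_same]
      rw [Real.norm_eq_abs, h2, abs_neg] at h1
      have := (abs_of_nonneg (by linarith : (0:ℝ) ≤ R + 1))
      rw [this] at h1; linarith
    · simp [F, h]
  calc ∫ x in Set.Icc a b, fderiv ℝ f x (Pi.single p 1)
      = ∫ x in Set.Icc a b, ∑ i, F' i x (Pi.single i 1) := by
        refine setIntegral_congr_fun measurableSet_Icc fun x _ => (hsum x).symm
    _ = 0 := by
        rw [key]
        apply Finset.sum_eq_zero
        intro i _
        simp [hfront, hback]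

lemma fderiv_re_add_im {ψ : (Fin 3 → ℝ) → ℂ} {x : Fin 3 → ℝ}
    (h : DifferentiableAt ℝ ψ x) (v : Fin 3 → ℝ) :
    ((fderiv ℝ (fun z => (ψ z).re) x v : ℝ) : ℂ)
      + ((fderiv ℝ (fun z => (ψ z).im) x v : ℝ) : ℂ) * Complex.I = fderiv ℝ ψ x v := by
  have hre : (fun z => (ψ z).re) = ⇑Complex.reCLM ∘ ψ := by funext z; simp
  have him : (fun z => (ψ z).im) = ⇑Complex.imCLM ∘ ψ := by funext z; simp
  have h1 := (Complex.reCLM.hasFDerivAt.comp x h.hasFDerivAt).fderiv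
  have h2 := (Complex.imCLM.hasFDerivAt.comp x h.hasFDerivAt).fderiv
  rw [hre, him, h1, h2]
  simp only [ContinuousLinearMap.coe_comp', Function.comp_apply, Complex.reCLM_apply,
    Complex.imCLM_apply]
  exact Complex.re_add_im _

lemma rearr (A B : (Fin 3 → ℝ) → Fin 3 → ℂ) (x : Fin 3 → ℝ) :
    ∑ l, ∑ p, ∑ q, (levi l p q : ℂ) * (A x l * pderivC p (fun z => B z q) x)
      = ∑ l, A x l * curlC B l x := by
  unfold curlC
  refine Finset.sum_congr rfl fun l _ => ?_
  rw [Finset.mul_sum]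
  refine Finset.sum_congr rfl fun p _ => ?_
  rw [Finset.mul_sum]
  refine Finset.sum_congr rfl fun q _ => ?_
  ring

lemma sum_levi_add (l : Fin 3) (A B : Fin 3 → Fin 3 → ℂ) :
    ∑ p, ∑ q, (levi l p q : ℂ) * (A p q + Complex.I * B p q)
      = (∑ p, ∑ q, (levi l p q : ℂ) * A p q)
        + Complex.I * ∑ p, ∑ q, (levi l p q : ℂ) * B p q := by
  rw [Finset.mul_sum, ← Finset.sum_add_distrib]
  refine Finset.sum_congr rfl fun p _ => ?_
  rw [Finset.mul_sum, ← Finset.sum_add_distrib]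
  refine Finset.sum_congr rfl fun q _ => ?_
  ring
/-- let `(E,H)` be a smooth time-harmonic solution of Maxwell's equations
`∇×E = ikH`, `∇×H = −ikE + J` on ℝ³ with `k ≠ 0`, `J` smooth and compactly supported,
and suppose `E`, `H` vanish identically outside a bounded set `N₂`.  Then for every point
`y ∉ supp E ∪ supp H` and every constant vector `a`, the source `J` is `L²`-orthogonal to
the electric part `G_e(·,y,k;a)` of the free-space Maxwell Green's function, i.e. the pair
`(G_e,G_h)` solving Maxwell's equations in ℝ³ with point current `a δ_y` (encoded
distributionally) and the Sommerfeld (Silver–Müller) radiation condition: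
`∫ J · G_e dx = 0`. -/
theorem source_orthogonal_to_green_function
    (k : ℝ) (hk : k ≠ 0)
    (E H J : (Fin 3 → ℝ) → Fin 3 → ℂ)
    (hE : ∀ q, ContDiff ℝ (⊤ : ℕ∞) fun x => E x q) (hH : ∀ q, ContDiff ℝ (⊤ : ℕ∞) fun x => H x q)
    (hJ : ∀ q, ContDiff ℝ (⊤ : ℕ∞) fun x => J x q) (hJc : HasCompactSupport J)
    (hMax1 : ∀ x, ∀ l, curlC E l x = Complex.I * k * H x l)
    (hMax2 : ∀ x, ∀ l, curlC H l x = -(Complex.I * k) * E x l + J x l)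
    (N₂ : Set (Fin 3 → ℝ)) (hN₂ : Bornology.IsBounded N₂)
    (hEvan : ∀ x ∉ N₂, E x = 0) (hHvan : ∀ x ∉ N₂, H x = 0)
    (y : Fin 3 → ℝ) (hy : y ∉ tsupport E ∪ tsupport H)
    (a : Fin 3 → ℂ)
    (Ge Gh : (Fin 3 → ℝ) → Fin 3 → ℂ)
    (hGe : ∀ q, ContDiffOn ℝ (⊤ : ℕ∞) (fun x => Ge x q) {x | x ≠ y})
    (hGh : ∀ q, ContDiffOn ℝ (⊤ : ℕ∞) (fun x => Gh x q) {x | x ≠ y})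
    (hGint : ∀ q, LocallyIntegrable (fun x => Ge x q) volume)
    (hGhint : ∀ q, LocallyIntegrable (fun x => Gh x q) volume)
    -- Maxwell's equations for the Green's function away from the pole:
    (hG1 : ∀ x, x ≠ y → ∀ l, curlC Ge l x = Complex.I * k * Gh x l)
    (hG2 : ∀ x, x ≠ y → ∀ l, curlC Gh l x = -(Complex.I * k) * Ge x l)
    -- the point current `a δ_y`, encoded distributionally:
    (hGdelta : ∀ φ : (Fin 3 → ℝ) → ℝ, ContDiff ℝ (⊤ : ℕ∞) φ → HasCompactSupport φ → ∀ l : Fin 3,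
      -∑ p, ∑ q, (levi l p q : ℂ) *
          ∫ x, Gh x q * (fderiv ℝ φ x (Pi.single p 1) : ℂ) =
        -(Complex.I * k) * (∫ x, Ge x l * (φ x : ℂ)) + a l * (φ y : ℂ))
    -- the Sommerfeld (Silver–Müller) radiation condition:
    (hSomm : Tendsto
      (fun x : Fin 3 → ℝ =>
        ‖x‖ * ‖(fun l => (∑ p, ∑ q, (levi l p q : ℂ) * ((x p / ‖x‖ : ℝ) : ℂ) * Gh x q)
          + Ge x l : Fin 3 → ℂ)‖)
      (Filter.cocompact (Fin 3 → ℝ)) (nhds 0)) :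
    ∫ x, ∑ l, J x l * Ge x l = 0 := by
  classical
  have hyE : y ∉ tsupport E := fun h => hy (Set.mem_union_left _ h)
  have hyH : y ∉ tsupport H := fun h => hy (Set.mem_union_right _ h)
  set U : Set (Fin 3 → ℝ) := (tsupport H)ᶜ with hUdef
  have hUopen : IsOpen U := (isClosed_tsupport H).isOpen_compl
  have hyU : y ∈ U := hyH
  have hHU : ∀ x ∈ U, H x = 0 := fun x hx => image_eq_zero_of_notMem_tsupport hx
  have hEcs : HasCompactSupport E :=
    HasCompactSupport.intro hN₂.isCompact_closure
      (fun x hx => hEvan x (fun h => hx (subset_closure h)))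
  have hHcs : HasCompactSupport H :=
    HasCompactSupport.intro hN₂.isCompact_closure
      (fun x hx => hHvan x (fun h => hx (subset_closure h)))
  have hEq : ∀ l, HasCompactSupport fun x => E x l := fun l =>
    HasCompactSupport.intro hN₂.isCompact_closure
      (fun x hx => by rw [hEvan x fun h => hx (subset_closure h)]; rfl)
  have hHq : ∀ q, HasCompactSupport fun x => H x q := fun q =>
    HasCompactSupport.intro hN₂.isCompact_closure
      (fun x hx => by rw [hHvan x fun h => hx (subset_closure h)]; rfl)
  have hne : IsOpen {x : Fin 3 → ℝ | x ≠ y} := isOpen_ne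
  have hGeDiff : ∀ l x, x ≠ y → DifferentiableAt ℝ (fun z => Ge z l) x := fun l x hx =>
    ((hGe l).contDiffAt (hne.mem_nhds hx)).differentiableAt (by simp)
  have hGeC1 : ∀ l, ContinuousOn (fderiv ℝ (fun z => Ge z l)) {x : Fin 3 → ℝ | x ≠ y} :=
    fun l => (hGe l).continuousOn_fderiv_of_isOpen hne (by simp)
  have pdC : ∀ (g : (Fin 3 → ℝ) → ℂ), ContDiff ℝ (⊤ : ℕ∞) g → ∀ p, Continuous (pderivC p g) :=
    fun g hg p =>
      (ContinuousLinearMap.apply ℝ ℂ (Pi.single p 1)).continuous.comp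
        (hg.continuous_fderiv (by simp))
  have pdCS : ∀ (g : (Fin 3 → ℝ) → ℂ), HasCompactSupport g → ∀ p,
      HasCompactSupport (pderivC p g) := fun g hg p =>
    (hg.fderiv ℝ).comp_left (g := fun L : (Fin 3 → ℝ) →L[ℝ] ℂ => L (Pi.single p 1)) rfl
  -- integrability facts
  have i1 : ∀ l p q : Fin 3, Integrable
      (fun x => pderivC p (fun z => H z q) x * Ge x l) volume := fun l p q =>
    mul_int' (hGint l) (pdC _ (hH q) p) (pdCS _ (hHq q) p)
  have i3 : ∀ l p q : Fin 3, Integrable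
      (fun x => Gh x q * pderivC p (fun z => E z l) x) volume := fun l p q =>
    mul_int (hGhint q) (pdC _ (hE l) p) (pdCS _ (hEq l) p)
  have iEG : ∀ l : Fin 3, Integrable (fun x => Ge x l * E x l) volume := fun l =>
    mul_int (hGint l) ((hE l).continuous) (hEq l)
  have iEG' : ∀ l : Fin 3, Integrable (fun x => E x l * Ge x l) volume := fun l =>
    mul_int' (hGint l) ((hE l).continuous) (hEq l)
  have contHdGe : ∀ l p q : Fin 3, Continuous
      (fun x => H x q * pderivC p (fun z => Ge z l) x) := by
    intro l p q
    rw [continuous_iff_continuousAt]; intro x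
    by_cases hx : x ∈ U
    · have hev : (fun z => H z q * pderivC p (fun w => Ge w l) z) =ᶠ[nhds x]
          fun _ => (0:ℂ) := by
        filter_upwards [hUopen.mem_nhds hx] with z hz
        simp [congrFun (hHU z hz) q]
      exact ContinuousAt.congr continuousAt_const hev.symm
    · have hxy : x ≠ y := fun h => hx (h ▸ hyU)
      have c1 : ContinuousAt (fun z => H z q) x := (hH q).continuous.continuousAt
      have c2 : ContinuousAt (fun z => pderivC p (fun w => Ge w l) z) x := by
        have hcg := (hGeC1 l).continuousAt (hne.mem_nhds hxy)
        exact ((ContinuousLinearMap.apply ℝ ℂ (Pi.single p 1)).continuous.continuousAt).comp hcg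
      exact c1.mul c2
  have i2 : ∀ l p q : Fin 3, Integrable
      (fun x => H x q * pderivC p (fun z => Ge z l) x) volume := fun l p q =>
    (contHdGe l p q).integrable_of_hasCompactSupport
      (HasCompactSupport.intro (hHq q)
        (fun x hx => by simp [image_eq_zero_of_notMem_tsupport hx]))
  -- integration by parts
  have IBP : ∀ l p q : Fin 3, (∫ x, pderivC p (fun z => H z q) x * Ge x l)
      = -∫ x, H x q * pderivC p (fun z => Ge z l) x := by
    intro l p q
    have hevP : ∀ x ∈ U, (fun z => H z q * Ge z l) =ᶠ[nhds x] fun _ => (0:ℂ) := by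
      intro x hx
      filter_upwards [hUopen.mem_nhds hx] with z hz
      simp [congrFun (hHU z hz) q]
    have hevH : ∀ x ∈ U, (fun z => H z q) =ᶠ[nhds x] fun _ => (0:ℂ) := by
      intro x hx
      filter_upwards [hUopen.mem_nhds hx] with z hz
      exact congrFun (hHU z hz) q
    have hd : Differentiable ℝ (fun z => H z q * Ge z l) := by
      intro x
      by_cases hx : x ∈ U
      · exact (differentiableAt_const (0:ℂ)).congr_of_eventuallyEq (hevP x hx)
      · have hxy : x ≠ y := fun h => hx (h ▸ hyU)
        exact (((hH q).differentiable (by simp)) x).mul (hGeDiff l x hxy)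
    have hcd : Continuous (fderiv ℝ (fun z => H z q * Ge z l)) := by
      rw [continuous_iff_continuousAt]; intro x
      by_cases hx : x ∈ U
      · have hz0 : ∀ z ∈ U, fderiv ℝ (fun w => H w q * Ge w l) z = 0 := by
          intro z hz
          rw [(hevP z hz).fderiv_eq]
          exact fderiv_const_apply (0:ℂ)
        refine ContinuousAt.congr
          (continuousAt_const (y := (0 : (Fin 3 → ℝ) →L[ℝ] ℂ))) ?_
        filter_upwards [hUopen.mem_nhds hx] with z hz
        exact (hz0 z hz).symm
      · have hxy : x ≠ y := fun h => hx (h ▸ hyU)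
        have hcdo : ContDiffOn ℝ (⊤ : ℕ∞) (fun z => H z q * Ge z l) {x : Fin 3 → ℝ | x ≠ y} :=
          ((hH q).contDiffOn).mul (hGe l)
        exact (hcdo.continuousOn_fderiv_of_isOpen hne (by simp)).continuousAt (hne.mem_nhds hxy)
    have hcs : HasCompactSupport (fun z => H z q * Ge z l) :=
      HasCompactSupport.intro (hHq q)
        (fun x hx => by simp [image_eq_zero_of_notMem_tsupport hx])
    have h0 := integral_pderiv_eq_zero hd hcd hcs p
    have prodRule : ∀ x, fderiv ℝ (fun z => H z q * Ge z l) x (Pi.single p 1)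
        = pderivC p (fun z => H z q) x * Ge x l
          + H x q * pderivC p (fun z => Ge z l) x := by
      intro x
      by_cases hx : x ∈ U
      · have e0 : fderiv ℝ (fun z => H z q * Ge z l) x = 0 := by
          rw [(hevP x hx).fderiv_eq]
          exact fderiv_const_apply (0:ℂ)
        have e1 : fderiv ℝ (fun z => H z q) x = 0 := by
          rw [(hevH x hx).fderiv_eq]
          exact fderiv_const_apply (0:ℂ)
        simp [pderivC, e0, e1, congrFun (hHU x hx) q]
      · have hxy : x ≠ y := fun h => hx (h ▸ hyU)
        have d1 : DifferentiableAt ℝ (fun z => H z q) x :=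
          ((hH q).differentiable (by simp)) x
        have d2 := hGeDiff l x hxy
        rw [fderiv_fun_mul d1 d2]
        simp only [pderivC, ContinuousLinearMap.add_apply, ContinuousLinearMap.smul_apply,
          smul_eq_mul]
        ring
    simp_rw [prodRule] at h0
    rw [integral_add (i1 l p q) (i2 l p q)] at h0
    linear_combination h0
  -- pointwise reciprocity identity
  have curlGeH : ∀ (x : Fin 3 → ℝ) (l : Fin 3),
      H x l * curlC Ge l x = H x l * (Complex.I * k * Gh x l) := by
    intro x l
    by_cases hx : x ∈ U
    · simp [congrFun (hHU x hx) l]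
    · have hxy : x ≠ y := fun h => hx (h ▸ hyU)
      rw [hG1 x hxy l]
  have pswap : ∀ x : Fin 3 → ℝ,
      (∑ l, ∑ p, ∑ q, (levi l p q : ℂ) * (H x q * pderivC p (fun z => Ge z l) x))
        = ∑ l, ∑ p, ∑ q, (levi l p q : ℂ) * (Gh x q * pderivC p (fun z => E z l) x) := by
    intro x
    calc (∑ l, ∑ p, ∑ q, (levi l p q : ℂ) * (H x q * pderivC p (fun z => Ge z l) x))
        = -∑ l, ∑ p, ∑ q, (levi l p q : ℂ) * (H x l * pderivC p (fun z => Ge z q) x) :=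
          triple_swap fun l p q => H x q * pderivC p (fun z => Ge z l) x
      _ = -∑ l, H x l * curlC Ge l x := by rw [rearr H Ge x]
      _ = -∑ l, Gh x l * curlC E l x := by
          congr 1
          refine Finset.sum_congr rfl fun l _ => ?_
          rw [curlGeH x l, hMax1 x l]
          ring
      _ = -∑ l, ∑ p, ∑ q, (levi l p q : ℂ) * (Gh x l * pderivC p (fun z => E z q) x) := by
          rw [rearr Gh E x]
      _ = ∑ l, ∑ p, ∑ q, (levi l p q : ℂ) * (Gh x q * pderivC p (fun z => E z l) x) :=
          (triple_swap fun l p q => Gh x q * pderivC p (fun z => E z l) x).symm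
  -- the distributional identity applied to the components of E
  have delta_l : ∀ l : Fin 3,
      (∑ p, ∑ q, (levi l p q : ℂ) * ∫ x, Gh x q * pderivC p (fun z => E z l) x)
        = Complex.I * k * ∫ x, Ge x l * E x l := by
    intro l
    have hφ₁ : ContDiff ℝ (⊤ : ℕ∞) fun x => (E x l).re := by
      have hh : (fun x => (E x l).re) = ⇑Complex.reCLM ∘ (fun x => E x l) := by
        funext z; simp
      rw [hh]; exact Complex.reCLM.contDiff.comp (hE l)
    have hφ₂ : ContDiff ℝ (⊤ : ℕ∞) fun x => (E x l).im := by
      have hh : (fun x => (E x l).im) = ⇑Complex.imCLM ∘ (fun x => E x l) := by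
        funext z; simp
      rw [hh]; exact Complex.imCLM.contDiff.comp (hE l)
    have hφ₁c : HasCompactSupport fun x => (E x l).re :=
      (hEq l).comp_left (g := Complex.re) rfl
    have hφ₂c : HasCompactSupport fun x => (E x l).im :=
      (hEq l).comp_left (g := Complex.im) rfl
    have hD1 := hGdelta (fun x => (E x l).re) hφ₁ hφ₁c l
    have hD2 := hGdelta (fun x => (E x l).im) hφ₂ hφ₂c l
    have hEyl : E y l = 0 := congrFun (image_eq_zero_of_notMem_tsupport hyE) l
    rw [show ((E y l).re : ℂ) = 0 by rw [hEyl]; simp] at hD1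
    rw [show ((E y l).im : ℂ) = 0 by rw [hEyl]; simp] at hD2
    rw [mul_zero, add_zero] at hD1 hD2
    -- split the integrals into real and imaginary parts
    have hsplit : ∀ p q : Fin 3, (∫ x, Gh x q * pderivC p (fun z => E z l) x)
        = (∫ x, Gh x q * ((fderiv ℝ (fun z => (E z l).re) x (Pi.single p 1) : ℝ) : ℂ))
          + Complex.I *
            ∫ x, Gh x q * ((fderiv ℝ (fun z => (E z l).im) x (Pi.single p 1) : ℝ) : ℂ) := by
      intro p q
      have iA : Integrable (fun x =>
          Gh x q * ((fderiv ℝ (fun z => (E z l).re) x (Pi.single p 1) : ℝ) : ℂ)) volume := by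
        apply mul_int (hGhint q)
        · exact Complex.continuous_ofReal.comp
            ((ContinuousLinearMap.apply ℝ ℝ (Pi.single p 1)).continuous.comp
              (hφ₁.continuous_fderiv (by simp)))
        · exact (hφ₁c.fderiv ℝ).comp_left
            (g := fun L : (Fin 3 → ℝ) →L[ℝ] ℝ => ((L (Pi.single p 1) : ℝ) : ℂ)) (by simp)
      have iB : Integrable (fun x =>
          Gh x q * ((fderiv ℝ (fun z => (E z l).im) x (Pi.single p 1) : ℝ) : ℂ)) volume := by
        apply mul_int (hGhint q)
        · exact Complex.continuous_ofReal.comp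
            ((ContinuousLinearMap.apply ℝ ℝ (Pi.single p 1)).continuous.comp
              (hφ₂.continuous_fderiv (by simp)))
        · exact (hφ₂c.fderiv ℝ).comp_left
            (g := fun L : (Fin 3 → ℝ) →L[ℝ] ℝ => ((L (Pi.single p 1) : ℝ) : ℂ)) (by simp)
      have hpt : ∀ x, Gh x q * pderivC p (fun z => E z l) x
          = Gh x q * ((fderiv ℝ (fun z => (E z l).re) x (Pi.single p 1) : ℝ) : ℂ)
            + Complex.I *
              (Gh x q * ((fderiv ℝ (fun z => (E z l).im) x (Pi.single p 1) : ℝ) : ℂ)) := by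
        intro x
        have hri : ((fderiv ℝ (fun z => (E z l).re) x (Pi.single p 1) : ℝ) : ℂ)
            + ((fderiv ℝ (fun z => (E z l).im) x (Pi.single p 1) : ℝ) : ℂ) * Complex.I
            = fderiv ℝ (fun z => E z l) x (Pi.single p 1) :=
          fderiv_re_add_im (((hE l).differentiable (by simp)) x) _
        rw [show pderivC p (fun z => E z l) x
            = fderiv ℝ (fun z => E z l) x (Pi.single p 1) from rfl, ← hri]
        ring
      calc (∫ x, Gh x q * pderivC p (fun z => E z l) x)
          = ∫ x, (Gh x q * ((fderiv ℝ (fun z => (E z l).re) x (Pi.single p 1) : ℝ) : ℂ)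
              + Complex.I *
                (Gh x q * ((fderiv ℝ (fun z => (E z l).im) x (Pi.single p 1) : ℝ) : ℂ))) := by
            simp only [hpt]
        _ = _ := by
            rw [integral_add iA (iB.const_mul Complex.I), integral_const_mul]
    have hsplitGe : (∫ x, Ge x l * E x l)
        = (∫ x, Ge x l * (((E x l).re : ℝ) : ℂ))
          + Complex.I * ∫ x, Ge x l * (((E x l).im : ℝ) : ℂ) := by
      have iA : Integrable (fun x => Ge x l * (((E x l).re : ℝ) : ℂ)) volume := by
        apply mul_int (hGint l)
        · exact Complex.continuous_ofReal.comp hφ₁.continuous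
        · exact hφ₁c.comp_left (g := fun t : ℝ => (t : ℂ)) (by simp)
      have iB : Integrable (fun x => Ge x l * (((E x l).im : ℝ) : ℂ)) volume := by
        apply mul_int (hGint l)
        · exact Complex.continuous_ofReal.comp hφ₂.continuous
        · exact hφ₂c.comp_left (g := fun t : ℝ => (t : ℂ)) (by simp)
      have hpt : ∀ x, Ge x l * E x l
          = Ge x l * (((E x l).re : ℝ) : ℂ)
            + Complex.I * (Ge x l * (((E x l).im : ℝ) : ℂ)) := by
        intro x
        have h := Complex.re_add_im (E x l)
        linear_combination (-(Ge x l)) * h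
      calc (∫ x, Ge x l * E x l)
          = ∫ x, (Ge x l * (((E x l).re : ℝ) : ℂ)
              + Complex.I * (Ge x l * (((E x l).im : ℝ) : ℂ))) := by
            simp only [hpt]
        _ = _ := by
            rw [integral_add iA (iB.const_mul Complex.I), integral_const_mul]
    rw [hsplitGe]
    calc (∑ p, ∑ q, (levi l p q : ℂ) * ∫ x, Gh x q * pderivC p (fun z => E z l) x)
        = ∑ p, ∑ q, (levi l p q : ℂ) *
            ((∫ x, Gh x q * ((fderiv ℝ (fun z => (E z l).re) x (Pi.single p 1) : ℝ) : ℂ))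
              + Complex.I *
               ∫ x, Gh x q * ((fderiv ℝ (fun z => (E z l).im) x (Pi.single p 1) : ℝ) : ℂ)) := by
          refine Finset.sum_congr rfl fun p _ => Finset.sum_congr rfl fun q _ => ?_
          rw [hsplit p q]
      _ = (∑ p, ∑ q, (levi l p q : ℂ) *
            ∫ x, Gh x q * ((fderiv ℝ (fun z => (E z l).re) x (Pi.single p 1) : ℝ) : ℂ))
          + Complex.I * ∑ p, ∑ q, (levi l p q : ℂ) *
            ∫ x, Gh x q * ((fderiv ℝ (fun z => (E z l).im) x (Pi.single p 1) : ℝ) : ℂ) :=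
          sum_levi_add l _ _
      _ = _ := by
          linear_combination (-1 : ℂ) * hD1 - Complex.I * hD2
  -- main computation
  have hintegrand : ∀ x : Fin 3 → ℝ, (∑ l, J x l * Ge x l)
      = (∑ l, ∑ p, ∑ q, (levi l p q : ℂ) * (pderivC p (fun z => H z q) x * Ge x l))
        + ∑ l, Complex.I * k * (E x l * Ge x l) := by
    intro x
    rw [← Finset.sum_add_distrib]
    refine Finset.sum_congr rfl fun l _ => ?_
    have hJl : J x l = curlC H l x + Complex.I * k * E x l := by
      linear_combination (-1 : ℂ) * hMax2 x l
    rw [hJl]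
    simp only [curlC, Finset.sum_mul, add_mul]
    congr 1
    · refine Finset.sum_congr rfl fun p _ => ?_
      refine Finset.sum_congr rfl fun q _ => ?_
      ring
    · ring
  have ia : Integrable (fun x =>
      ∑ l, ∑ p, ∑ q, (levi l p q : ℂ) * (pderivC p (fun z => H z q) x * Ge x l)) volume :=
    integrable_finset_sum _ fun l _ => integrable_finset_sum _ fun p _ =>
      integrable_finset_sum _ fun q _ => ((i1 l p q).const_mul _)
  have ib : Integrable (fun x => ∑ l, Complex.I * k * (E x l * Ge x l)) volume :=
    integrable_finset_sum _ fun l _ => ((iEG' l).const_mul _)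
  have intSum1 : ∫ x, ∑ l, ∑ p, ∑ q,
        (levi l p q : ℂ) * (pderivC p (fun z => H z q) x * Ge x l)
      = ∑ l, ∑ p, ∑ q, (levi l p q : ℂ) * ∫ x, pderivC p (fun z => H z q) x * Ge x l := by
    rw [integral_finset_sum _ (fun l _ => integrable_finset_sum _ fun p _ =>
      integrable_finset_sum _ fun q _ => ((i1 l p q).const_mul _))]
    refine Finset.sum_congr rfl fun l _ => ?_
    rw [integral_finset_sum _ (fun p _ => integrable_finset_sum _ fun q _ =>
      ((i1 l p q).const_mul _))]
    refine Finset.sum_congr rfl fun p _ => ?_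
    rw [integral_finset_sum _ (fun q _ => ((i1 l p q).const_mul _))]
    refine Finset.sum_congr rfl fun q _ => ?_
    exact integral_const_mul _ _
  have intSum2 : ∫ x, ∑ l, ∑ p, ∑ q,
        (levi l p q : ℂ) * (H x q * pderivC p (fun z => Ge z l) x)
      = ∑ l, ∑ p, ∑ q, (levi l p q : ℂ) * ∫ x, H x q * pderivC p (fun z => Ge z l) x := by
    rw [integral_finset_sum _ (fun l _ => integrable_finset_sum _ fun p _ =>
      integrable_finset_sum _ fun q _ => ((i2 l p q).const_mul _))]
    refine Finset.sum_congr rfl fun l _ => ?_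
    rw [integral_finset_sum _ (fun p _ => integrable_finset_sum _ fun q _ =>
      ((i2 l p q).const_mul _))]
    refine Finset.sum_congr rfl fun p _ => ?_
    rw [integral_finset_sum _ (fun q _ => ((i2 l p q).const_mul _))]
    refine Finset.sum_congr rfl fun q _ => ?_
    exact integral_const_mul _ _
  have intSum3 : ∫ x, ∑ l, ∑ p, ∑ q,
        (levi l p q : ℂ) * (Gh x q * pderivC p (fun z => E z l) x)
      = ∑ l, ∑ p, ∑ q, (levi l p q : ℂ) * ∫ x, Gh x q * pderivC p (fun z => E z l) x := by
    rw [integral_finset_sum _ (fun l _ => integrable_finset_sum _ fun p _ =>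
      integrable_finset_sum _ fun q _ => ((i3 l p q).const_mul _))]
    refine Finset.sum_congr rfl fun l _ => ?_
    rw [integral_finset_sum _ (fun p _ => integrable_finset_sum _ fun q _ =>
      ((i3 l p q).const_mul _))]
    refine Finset.sum_congr rfl fun p _ => ?_
    rw [integral_finset_sum _ (fun q _ => ((i3 l p q).const_mul _))]
    refine Finset.sum_congr rfl fun q _ => ?_
    exact integral_const_mul _ _
  calc ∫ x, ∑ l, J x l * Ge x l
      = ∫ x, ((∑ l, ∑ p, ∑ q, (levi l p q : ℂ) * (pderivC p (fun z => H z q) x * Ge x l))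
          + ∑ l, Complex.I * k * (E x l * Ge x l)) := by simp only [hintegrand]
    _ = (∫ x, ∑ l, ∑ p, ∑ q, (levi l p q : ℂ) * (pderivC p (fun z => H z q) x * Ge x l))
        + ∫ x, ∑ l, Complex.I * k * (E x l * Ge x l) := integral_add ia ib
    _ = (∑ l, ∑ p, ∑ q, (levi l p q : ℂ) * ∫ x, pderivC p (fun z => H z q) x * Ge x l)
        + ∑ l, Complex.I * k * ∫ x, E x l * Ge x l := by
        rw [intSum1, integral_finset_sum _ (fun l _ => ((iEG' l).const_mul _))]
        congr 1
        exact Finset.sum_congr rfl fun l _ => integral_const_mul _ _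
    _ = (-∑ l, ∑ p, ∑ q, (levi l p q : ℂ) * ∫ x, H x q * pderivC p (fun z => Ge z l) x)
        + ∑ l, Complex.I * k * ∫ x, E x l * Ge x l := by
        congr 1
        rw [← Finset.sum_neg_distrib]
        refine Finset.sum_congr rfl fun l _ => ?_
        rw [← Finset.sum_neg_distrib]
        refine Finset.sum_congr rfl fun p _ => ?_
        rw [← Finset.sum_neg_distrib]
        refine Finset.sum_congr rfl fun q _ => ?_
        rw [IBP l p q]
        ring
    _ = (-∑ l, ∑ p, ∑ q, (levi l p q : ℂ) * ∫ x, Gh x q * pderivC p (fun z => E z l) x)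
        + ∑ l, Complex.I * k * ∫ x, E x l * Ge x l := by
        have hps : (fun x => ∑ l, ∑ p, ∑ q,
              (levi l p q : ℂ) * (H x q * pderivC p (fun z => Ge z l) x))
            = fun x => ∑ l, ∑ p, ∑ q,
              (levi l p q : ℂ) * (Gh x q * pderivC p (fun z => E z l) x) :=
          funext pswap
        rw [← intSum2, ← intSum3, hps]
    _ = (-∑ l, Complex.I * k * ∫ x, Ge x l * E x l)
        + ∑ l, Complex.I * k * ∫ x, Ge x l * E x l := by
        congr 1
        · rw [neg_inj]
          exact Finset.sum_congr rfl fun l _ => delta_l l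
        · refine Finset.sum_congr rfl fun l _ => ?_
          congr 1
          have he : (fun x => E x l * Ge x l) = fun x => Ge x l * E x l :=
            funext fun x => mul_comm _ _
          rw [he]
    _ = 0 := by ring
end

section
/- Let g̃ be the double coating metric on N = B(0,2) ⊂ ℝ³, equal on the annulus 1 < r < 2 to (F₁)_* g_e with F₁(x) = (r/2+1)x/r, and on the punctured ball 0 < r < 1 to the pushforward of the round metric of S³ of radius 1/π under the inverse exponential map from the south pole; in Fermi coordinates (ω, τ) from Σ = {r=1}, g̃ = dτ² + τ² dω² + O(τ⁴) on both sides. Then the matrix-valued function det(g̃)^{1/2} g̃^{jk} extends to a Lipschitz continuous function on all of N. -/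
/-- The tangential coefficient of the double coating metric in Fermi coordinates `(ω,τ)`
from the cloaking surface `Σ`: on the outside (`τ ≥ 0`, coming from the blow-up `F₁` of
the Euclidean metric) it is `τ²`, on the inside (`τ < 0`, coming from the round sphere
`S³_{1/π}` via the exponential map, with `τ = r − 1`) it is
`sin²(π(1+τ))/π² = sin²(πτ)/π²`. -/
noncomputable def fermiCoeff (τ : ℝ) : ℝ :=
  if 0 ≤ τ then τ ^ 2 else Real.sin (Real.pi * τ) ^ 2 / Real.pi ^ 2

/-- The double coating metric in Fermi coordinates: `g̃ = dτ² + fermiCoeff(τ) dω²`,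
represented (in a chart where the round metric `dω²` is normalized at the chosen point)
by the matrix `diag(1, fermiCoeff τ, fermiCoeff τ)`. -/
noncomputable def fermiMetric (τ : ℝ) : Matrix (Fin 3) (Fin 3) ℝ :=
  Matrix.diagonal ![1, fermiCoeff τ, fermiCoeff τ]

/-!
Outside `Σ` the tangential coefficient `f` of `g̃` is exactly `τ²`; inside it is `sin²(πτ)/π²`,
which differs from `τ²` by at most `π²τ⁴/3` because `|x - sin x| ≤ |x|³/6`.
Since `g̃ = diag(1, f, f)`, the density `det(g̃)^{1/2} g̃^{jk}` is `diag(f, 1, 1)` off `Σ`, so its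
Lipschitz continuity across `Σ` is that of `f`: both branches vanish at `τ = 0`, `τ²` is
1-Lipschitz on `[0, 1/2]`, and `sin²` is 1-Lipschitz on `ℝ` because
`sin² x - sin² y = sin (x + y) sin (x - y)`.
-/

open Real Set Matrix

theorem abs_sin_sq_sub_sq_le (x : ℝ) : |sin x ^ 2 - x ^ 2| ≤ x ^ 4 / 3 := by
  have h_le : |sin x| ≤ |x| := abs_sin_le_abs
  have h_gap : |x| - |sin x| ≤ |x| ^ 3 / 6 :=
    (abs_sub_abs_le_abs_sub x (sin x)).trans (abs_sub_sin_le x)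
  rw [← sq_abs (sin x), ← sq_abs x, abs_sub_comm,
    abs_of_nonneg (sub_nonneg.2 (pow_le_pow_left₀ (abs_nonneg _) h_le 2))]
  calc |x| ^ 2 - |sin x| ^ 2 = (|x| - |sin x|) * (|x| + |sin x|) := by ring
    _ ≤ |x| ^ 3 / 6 * (2 * |x|) := by gcongr; linarith [abs_nonneg (sin x)]
    _ = x ^ 4 / 3 := by rw [← Even.pow_abs (by decide : Even 4)]; ring

theorem abs_sin_sq_sub_sin_sq_le (x y : ℝ) : |sin x ^ 2 - sin y ^ 2| ≤ |x - y| := by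
  have h : sin x ^ 2 - sin y ^ 2 = sin (x + y) * sin (x - y) := by
    rw [sin_add, sin_sub]; ring_nf; rw [cos_sq', cos_sq']; ring
  rw [h, abs_mul]
  calc |sin (x + y)| * |sin (x - y)| ≤ 1 * |x - y| :=
        mul_le_mul (abs_sin_le_one _) abs_sin_le_abs (abs_nonneg _) zero_le_one
    _ = |x - y| := one_mul _

theorem LipschitzOnWith.Icc_union_Icc {α : Type*} [PseudoMetricSpace α] {f : ℝ → α} {K : NNReal}
    {a b c : ℝ} (hab : LipschitzOnWith K f (Icc a b)) (hbc : LipschitzOnWith K f (Icc b c)) :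
    LipschitzOnWith K f (Icc a c) := by
  rw [lipschitzOnWith_iff_dist_le_mul] at *
  have key : ∀ x ∈ Icc a c, ∀ y ∈ Icc a c, x ≤ y → dist (f x) (f y) ≤ K * dist x y := by
    intro x hx y hy hxy
    rcases le_total y b with hyb | hby
    · exact hab x ⟨hx.1, hxy.trans hyb⟩ y ⟨hx.1.trans hxy, hyb⟩
    rcases le_total b x with hbx | hxb
    · exact hbc x ⟨hbx, hxy.trans hy.2⟩ y ⟨hbx.trans hxy, hy.2⟩
    have hb_left : b ∈ Icc a b := ⟨hx.1.trans hxb, le_rfl⟩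
    have hb_right : b ∈ Icc b c := ⟨le_rfl, hby.trans hy.2⟩
    calc dist (f x) (f y) ≤ dist (f x) (f b) + dist (f b) (f y) := dist_triangle _ _ _
      _ ≤ K * dist x b + K * dist b y :=
          add_le_add (hab x ⟨hx.1, hxb⟩ b hb_left) (hbc b hb_right y ⟨hby, hy.2⟩)
      _ = K * dist x y := by
          rw [Real.dist_eq, Real.dist_eq, Real.dist_eq, abs_of_nonpos (by linarith),
            abs_of_nonpos (by linarith), abs_of_nonpos (by linarith)]
          ring
  intro x hx y hy
  rcases le_total x y with hxy | hyx
  · exact key x hx y hy hxy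
  · rw [dist_comm, dist_comm x]; exact key y hy x hx hyx

theorem fermiCoeff_of_nonneg {τ : ℝ} (h : 0 ≤ τ) : fermiCoeff τ = τ ^ 2 := if_pos h

theorem fermiCoeff_of_nonpos {τ : ℝ} (h : τ ≤ 0) : fermiCoeff τ = sin (π * τ) ^ 2 / π ^ 2 := by
  rcases h.lt_or_eq with h | rfl
  · exact if_neg h.not_ge
  · simp [fermiCoeff]

theorem abs_fermiCoeff_sub_sq_le (τ : ℝ) : |fermiCoeff τ - τ ^ 2| ≤ π ^ 2 / 3 * τ ^ 4 := by
  rcases le_total 0 τ with h | h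
  · rw [fermiCoeff_of_nonneg h, sub_self, abs_zero]; positivity
  · have hπ : (0 : ℝ) < π ^ 2 := by positivity
    calc |fermiCoeff τ - τ ^ 2| = |sin (π * τ) ^ 2 - (π * τ) ^ 2| / π ^ 2 := by
          rw [fermiCoeff_of_nonpos h, ← abs_of_pos hπ, ← abs_div, abs_of_pos hπ]
          congr 1; field_simp
      _ ≤ (π * τ) ^ 4 / 3 / π ^ 2 := by gcongr; exact abs_sin_sq_sub_sq_le _
      _ = π ^ 2 / 3 * τ ^ 4 := by field_simp

theorem fermiCoeff_pos {τ : ℝ} (h₁ : -1 < τ) (h₀ : τ ≠ 0) : 0 < fermiCoeff τ := by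
  rcases h₀.lt_or_gt with h | h
  · rw [fermiCoeff_of_nonpos h.le]
    have : sin (π * τ) ≠ 0 := by
      rw [Ne, sin_eq_zero_iff_of_lt_of_lt (by nlinarith [pi_pos]) (by nlinarith [pi_pos])]
      exact mul_ne_zero pi_ne_zero h.ne
    positivity
  · rw [fermiCoeff_of_nonneg h.le]; positivity

theorem lipschitzOnWith_fermiCoeff : LipschitzOnWith 1 fermiCoeff (Icc (-(1:ℝ)/2) (1/2)) := by
  refine LipschitzOnWith.Icc_union_Icc (b := 0) ?_ ?_ <;>
    refine LipschitzOnWith.of_dist_le_mul fun x hx y hy => ?_ <;>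
    simp only [Real.dist_eq, NNReal.coe_one, one_mul]
  · rw [fermiCoeff_of_nonpos hx.2, fermiCoeff_of_nonpos hy.2, ← sub_div, abs_div,
      abs_of_pos (by positivity : (0 : ℝ) < π ^ 2), div_le_iff₀ (by positivity)]
    calc |sin (π * x) ^ 2 - sin (π * y) ^ 2| ≤ |π * x - π * y| := abs_sin_sq_sub_sin_sq_le _ _
      _ = π * |x - y| := by rw [← mul_sub, abs_mul, abs_of_pos pi_pos]
      _ ≤ π ^ 2 * |x - y| := by gcongr; nlinarith [pi_gt_three]
      _ = |x - y| * π ^ 2 := mul_comm _ _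
  · rw [fermiCoeff_of_nonneg hx.1, fermiCoeff_of_nonneg hy.1, sq_sub_sq, abs_mul]
    calc |x + y| * |x - y| ≤ 1 * |x - y| := by
          gcongr; rw [abs_of_nonneg (by linarith [hx.1, hy.1])]; linarith [hx.2, hy.2]
      _ = |x - y| := one_mul _

theorem sqrt_det_smul_inv_diagonal_one_c_c {c : ℝ} (hc : 0 < c) :
    √(diagonal ![1, c, c]).det • (diagonal ![1, c, c])⁻¹ = diagonal ![c, 1, 1] := by
  have hdet : (diagonal ![1, c, c]).det = c ^ 2 := by
    simp [det_diagonal, Fin.prod_univ_three, sq]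
  have hunit : IsUnit ![1, c, c] := Pi.isUnit_iff.2 fun i => by fin_cases i <;> simp [hc.ne']
  rw [hdet, sqrt_sq hc.le, inv_diagonal, ← diagonal_smul, Ring.inverse_of_isUnit hunit]
  congr 1
  ext i; fin_cases i <;> simp [hc.ne']

theorem LipschitzOnWith.diagonal_apply {ι : Type*} [DecidableEq ι] {v : ℝ → ι → ℝ} {K : NNReal}
    {s : Set ℝ} (hv : ∀ k, LipschitzOnWith K (fun τ => v τ k) s) (i j : ι) :
    LipschitzOnWith K (fun τ => diagonal (v τ) i j) s := by
  by_cases hij : i = j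
  · subst hij; simpa using hv i
  · simpa [diagonal_apply_ne _ hij] using (LipschitzWith.const' (0 : ℝ)).lipschitzOnWith

/-- for the double coating metric, in Fermi coordinates both sides are
`dτ² + τ²dω² + O(τ⁴)`, and the matrix-valued function `det(g̃)^{1/2} g̃^{jk}` extends from
`τ ≠ 0` to a Lipschitz continuous function across the cloaking surface `{τ = 0}`. -/
theorem double_coating_density_lipschitz :
    (∃ C > 0, ∀ τ ∈ Set.Icc (-(1:ℝ)/2) (1/2), |fermiCoeff τ - τ ^ 2| ≤ C * τ ^ 4) ∧
    ∃ (L : ℝ → Matrix (Fin 3) (Fin 3) ℝ) (K : NNReal),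
      (∀ i j : Fin 3, LipschitzOnWith K (fun τ => L τ i j) (Set.Icc (-(1:ℝ)/2) (1/2))) ∧
      ∀ τ ∈ Set.Icc (-(1:ℝ)/2) (1/2), τ ≠ 0 →
        L τ = Real.sqrt (fermiMetric τ).det • (fermiMetric τ)⁻¹ := by
  refine ⟨⟨π ^ 2 / 3, by positivity, fun τ _ => abs_fermiCoeff_sub_sq_le τ⟩,
    fun τ => diagonal ![fermiCoeff τ, 1, 1], 1, ?_, fun τ hτ hτ₀ => ?_⟩
  · refine LipschitzOnWith.diagonal_apply fun k => ?_
    fin_cases k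
    · exact lipschitzOnWith_fermiCoeff
    all_goals exact (LipschitzWith.const' (1 : ℝ)).lipschitzOnWith
  · exact (sqrt_det_smul_inv_diagonal_one_c_c (fermiCoeff_pos (by linarith [hτ.1]) hτ₀)).symm
end

section
/- Let g̃₁ be the single coating metric on the annulus N₁ = {1<|y|<2} ⊂ ℝ³ (pushforward of Euclidean metric under F₁(x)=(r/2+1)x/r), let f ∈ H^{1/2}(Σ) on Σ = {|y|=1}, let E^f ∈ H¹(N₁, dx) extend f, and let χ ∈ C₀^∞(ℝ) with χ = 1 near 0. Define w_ε = χ(τ/ε)E^f on N₁ where τ = 2(|y|−1). Then lim_{ε→0} ∫_{N₁} det(g̃₁)^{1/2}[ g̃₁^{ij} ∂_i w_ε ∂_j w_ε + |w_ε|² ] dx = 0. -/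
open MeasureTheory Filter

local notation "E3" => EuclideanSpace ℝ (Fin 3)

set_option maxHeartbeats 1000000

lemma sum_sq_coord (x : E3) : ∑ i : Fin 3, (x i) ^ 2 = ‖x‖ ^ 2 := by
  rw [EuclideanSpace.norm_eq, Real.sq_sqrt (by positivity)]
  simp [sq_abs]

lemma decomp (x : E3) (r : ℝ) :
    (r⁻¹ • x : E3) = ∑ i : Fin 3, (r⁻¹ * x i) • EuclideanSpace.single i (1:ℝ) := by
  ext j
  rw [Fin.sum_univ_three]
  fin_cases j <;>
    simp [EuclideanSpace.single_apply, PiLp.add_apply, PiLp.smul_apply, smul_eq_mul]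
lemma hasFDerivAt_norm' (x : E3) (hx : x ≠ 0) :
    HasFDerivAt (fun z : E3 => ‖z‖) (‖x‖⁻¹ • innerSL ℝ x) x := by
  have h1 : HasFDerivAt (fun z : E3 => ‖z‖ ^ 2) (2 • innerSL ℝ x) x :=
    (hasStrictFDerivAt_norm_sq x).hasFDerivAt
  have h2 : HasFDerivAt (fun z : E3 => Real.sqrt (‖z‖ ^ 2))
      ((1 / (2 * Real.sqrt (‖x‖ ^ 2))) • (2 • innerSL ℝ x)) x :=
    h1.sqrt (by simpa using pow_ne_zero 2 (norm_ne_zero_iff.2 hx))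
  have he : (fun z : E3 => Real.sqrt (‖z‖ ^ 2)) = fun z : E3 => ‖z‖ := by
    funext z; exact Real.sqrt_sq (norm_nonneg z)
  rw [he] at h2
  refine h2.congr_fderiv ?_
  rw [Real.sqrt_sq (norm_nonneg x)]
  ext v
  simp [smul_smul]
  ring

lemma key_hasfd (Ef : E3 → ℝ) (hEf : Differentiable ℝ Ef) (χ : ℝ → ℝ) (hχ : ContDiff ℝ (⊤ : ℕ∞) χ)
    (ε : ℝ) (x : E3) (hx : x ≠ 0) :
    HasFDerivAt (fun z : E3 => χ (2 * (‖z‖ - 1) / ε) * Ef z)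
      ((χ (2 * (‖x‖ - 1) / ε)) • fderiv ℝ Ef x +
        (Ef x * (deriv χ (2 * (‖x‖ - 1) / ε) * (2 / ε))) • (‖x‖⁻¹ • innerSL ℝ x)) x := by
  have hn := hasFDerivAt_norm' x hx
  have hρ : HasFDerivAt (fun z : E3 => 2 * (‖z‖ - 1) / ε)
      ((2 / ε) • (‖x‖⁻¹ • innerSL ℝ x)) x := by
    have h := (hn.sub_const 1).const_mul (2 / ε)
    have he : (fun z : E3 => 2 * (‖z‖ - 1) / ε) = fun y => 2 / ε * (‖y‖ - 1) := by
      funext z; ring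
    rw [he]; exact h
  have hχd : HasDerivAt χ (deriv χ (2 * (‖x‖ - 1) / ε)) (2 * (‖x‖ - 1) / ε) :=
    ((hχ.differentiable (by simp)) _).hasDerivAt
  have hcomp := hχd.comp_hasFDerivAt x hρ
  have hmul := hcomp.mul (hEf x).hasFDerivAt
  refine hmul.congr_fderiv ?_
  ext v
  simp only [ContinuousLinearMap.add_apply, ContinuousLinearMap.coe_smul', Pi.smul_apply,
    smul_eq_mul, Function.comp_apply]
  ring

lemma fderiv_val (Ef : E3 → ℝ) (hEf : Differentiable ℝ Ef) (χ : ℝ → ℝ) (hχ : ContDiff ℝ (⊤ : ℕ∞) χ)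
    (ε : ℝ) (x : E3) (hx : x ≠ 0) (v : E3) :
    fderiv ℝ (fun z : E3 => χ (2 * (‖z‖ - 1) / ε) * Ef z) x v
      = χ (2 * (‖x‖ - 1) / ε) * fderiv ℝ Ef x v +
        (Ef x * (deriv χ (2 * (‖x‖ - 1) / ε) * (2 / ε))) * (‖x‖⁻¹ * (inner ℝ x v : ℝ)) := by
  rw [(key_hasfd Ef hEf χ hχ ε x hx).fderiv]
  simp only [ContinuousLinearMap.add_apply, ContinuousLinearMap.coe_smul', Pi.smul_apply,
    smul_eq_mul, innerSL_apply_apply]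


lemma point_bound (Ef : E3 → ℝ) (hEf : Differentiable ℝ Ef) (χ : ℝ → ℝ) (hχ : ContDiff ℝ (⊤ : ℕ∞) χ)
    (C0 C1 M : ℝ) (hM : 0 < M) (hC0 : ∀ t, |χ t| ≤ C0) (hC1 : ∀ t, |deriv χ t| ≤ C1)
    (hMz : ∀ t : ℝ, M ≤ |t| → deriv χ t = 0)
    (ε : ℝ) (hε : 0 < ε) (x : E3) (hx1 : 1 < ‖x‖) (hx2 : ‖x‖ < 2) :
    |(2 * (‖x‖ - 1) ^ 2 / ‖x‖ ^ 2) *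
        (fderiv ℝ (fun z => χ (2 * (‖z‖ - 1) / ε) * Ef z) x (‖x‖⁻¹ • x)) ^ 2
      + 2 * ((∑ i, (fderiv ℝ (fun z => χ (2 * (‖z‖ - 1) / ε) * Ef z) x
            (EuclideanSpace.single i (1:ℝ))) ^ 2)
          - (fderiv ℝ (fun z => χ (2 * (‖z‖ - 1) / ε) * Ef z) x (‖x‖⁻¹ • x)) ^ 2)
      + (8 * (‖x‖ - 1) ^ 2 / ‖x‖ ^ 2) * (χ (2 * (‖x‖ - 1) / ε) * Ef x) ^ 2|
    ≤ (4 * M ^ 2 * C1 ^ 2 + 14 * C0 ^ 2) *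
        ((Ef x) ^ 2 + ∑ i, (fderiv ℝ Ef x (EuclideanSpace.single i (1:ℝ))) ^ 2) := by
  have hxne : x ≠ 0 := by
    intro h; rw [h] at hx1; norm_num at hx1
  have hr0 : (0:ℝ) < ‖x‖ := lt_trans one_pos hx1
  have hεn : ε ≠ 0 := ne_of_gt hε
  have hrn : ‖x‖ ≠ 0 := ne_of_gt hr0
  have hC0nn : 0 ≤ C0 := le_trans (abs_nonneg _) (hC0 0)
  have hC1nn : 0 ≤ C1 := le_trans (abs_nonneg _) (hC1 0)
  set r := ‖x‖ with hrdef
  set t := 2 * (r - 1) / ε with htdef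
  set φ := χ t with hφdef
  set d := deriv χ t with hddef
  set a := Ef x with hadef
  set c := a * (d * (2 / ε)) with hcdef
  set Di := fun i : Fin 3 => fderiv ℝ Ef x (EuclideanSpace.single i (1:ℝ)) with hDidef
  set G := ∑ i, (Di i) ^ 2 with hGdef
  set P := fderiv ℝ Ef x (r⁻¹ • x) with hPdef
  have hGnn : 0 ≤ G := Finset.sum_nonneg fun i _ => sq_nonneg _
  -- the radial derivative
  have hR : fderiv ℝ (fun z => χ (2 * (‖z‖ - 1) / ε) * Ef z) x (r⁻¹ • x) = φ * P + c := by
    have hval := fderiv_val Ef hEf χ hχ ε x hxne (r⁻¹ • x)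
    rw [real_inner_smul_right, real_inner_self_eq_norm_sq] at hval
    have hone : ‖x‖⁻¹ * (‖x‖⁻¹ * ‖x‖ ^ 2) = 1 := by
      field_simp
    rw [hone, mul_one] at hval
    rw [hval]
  -- the coordinate derivatives
  have hSi : ∀ i : Fin 3, fderiv ℝ (fun z => χ (2 * (‖z‖ - 1) / ε) * Ef z) x
      (EuclideanSpace.single i (1:ℝ)) = φ * Di i + c * (r⁻¹ * x i) := by
    intro i
    rw [fderiv_val Ef hEf χ hχ ε x hxne, EuclideanSpace.inner_single_right]
    rw [← hrdef, ← htdef, ← hφdef, ← hddef, ← hadef]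
    simp [hDidef, hcdef]
  have hx2sum : ∑ i : Fin 3, (x i) ^ 2 = r ^ 2 := sum_sq_coord x
  have hmsum : ∑ i : Fin 3, (r⁻¹ * x i) ^ 2 = 1 := by
    have h1 : ∑ i : Fin 3, (r⁻¹ * x i) ^ 2 = r⁻¹ ^ 2 * ∑ i : Fin 3, (x i) ^ 2 := by
      rw [Finset.mul_sum]; exact Finset.sum_congr rfl fun i _ => by ring
    rw [h1, hx2sum]; field_simp
  have hP : P = ∑ i : Fin 3, (r⁻¹ * x i) * Di i := by
    rw [hPdef, decomp x r, map_sum]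
    exact Finset.sum_congr rfl fun i _ => by
      rw [ContinuousLinearMap.map_smul, smul_eq_mul, hDidef]
  have hPsq : P ^ 2 ≤ G := by
    calc P ^ 2 = (∑ i : Fin 3, (r⁻¹ * x i) * Di i) ^ 2 := by rw [hP]
    _ ≤ (∑ i : Fin 3, (r⁻¹ * x i) ^ 2) * ∑ i : Fin 3, (Di i) ^ 2 :=
        Finset.sum_mul_sq_le_sq_mul_sq _ _ _
    _ = G := by rw [hmsum, one_mul]
  -- the sum of squares
  have hSS : (∑ i, (fderiv ℝ (fun z => χ (2 * (‖z‖ - 1) / ε) * Ef z) x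
      (EuclideanSpace.single i (1:ℝ))) ^ 2) = φ ^ 2 * G + 2 * φ * c * P + c ^ 2 := by
    rw [Finset.sum_congr rfl fun i _ => by rw [hSi i]]
    have hexp : ∀ i : Fin 3, (φ * Di i + c * (r⁻¹ * x i)) ^ 2
        = φ ^ 2 * (Di i) ^ 2 + (2 * φ * c) * ((r⁻¹ * x i) * Di i)
          + c ^ 2 * (r⁻¹ * x i) ^ 2 := fun i => by ring
    rw [Finset.sum_congr rfl fun i _ => hexp i, Finset.sum_add_distrib,
      Finset.sum_add_distrib, ← Finset.mul_sum, ← Finset.mul_sum, ← Finset.mul_sum,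
      hmsum, ← hP, hGdef]
    ring
  -- weights
  have hwr0 : 0 ≤ 2 * (r - 1) ^ 2 / r ^ 2 := by positivity
  have hwr2 : 2 * (r - 1) ^ 2 / r ^ 2 ≤ 2 := by
    rw [div_le_iff₀ (by positivity)]; nlinarith
  have hwv0 : 0 ≤ 8 * (r - 1) ^ 2 / r ^ 2 := by positivity
  have hwv8 : 8 * (r - 1) ^ 2 / r ^ 2 ≤ 8 := by
    rw [div_le_iff₀ (by positivity)]; nlinarith
  have hφsq : φ ^ 2 ≤ C0 ^ 2 := by
    calc φ ^ 2 = |φ| ^ 2 := (sq_abs _).symm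
    _ ≤ C0 ^ 2 := pow_le_pow_left₀ (abs_nonneg _) (hC0 t) 2
  have hdsq : d ^ 2 ≤ C1 ^ 2 := by
    calc d ^ 2 = |d| ^ 2 := (sq_abs _).symm
    _ ≤ C1 ^ 2 := pow_le_pow_left₀ (abs_nonneg _) (hC1 t) 2
  -- the key weighted estimate
  have hwrc : (2 * (r - 1) ^ 2 / r ^ 2) * c ^ 2 ≤ 2 * M ^ 2 * C1 ^ 2 * a ^ 2 := by
    rcases le_or_gt M |t| with hMt | hMt
    · have hd0 : d = 0 := hMz t hMt
      rw [hcdef, hd0]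
      simp
      positivity
    · have hrt1 : (0:ℝ) ≤ r - 1 := by linarith
      have ht0 : 0 ≤ t := div_nonneg (by linarith) hε.le
      rw [abs_of_nonneg ht0, htdef, div_lt_iff₀ hε] at hMt
      have hq : (r - 1) * (2 / ε) ≤ M := by
        have h2 : 2 * (r - 1) / ε ≤ M := (div_le_iff₀ hε).mpr (by linarith)
        calc (r - 1) * (2 / ε) = 2 * (r - 1) / ε := by ring
        _ ≤ M := h2
      have hq0 : 0 ≤ (r - 1) * (2 / ε) := mul_nonneg hrt1 (by positivity)
      have hqM2 : ((r - 1) * (2 / ε)) ^ 2 ≤ M ^ 2 := pow_le_pow_left₀ hq0 hq 2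
      have hceq : (2 * (r - 1) ^ 2 / r ^ 2) * c ^ 2
          = (2 / r ^ 2) * (((r - 1) * (2 / ε)) ^ 2 * (a ^ 2 * d ^ 2)) := by
        ring
      have hle1 : (2 / r ^ 2) * (((r - 1) * (2 / ε)) ^ 2 * (a ^ 2 * d ^ 2))
          ≤ 2 * (((r - 1) * (2 / ε)) ^ 2 * (a ^ 2 * d ^ 2)) := by
        apply mul_le_mul_of_nonneg_right _ (by positivity)
        rw [div_le_iff₀ (by positivity)]
        nlinarith
      have hle2 : ((r - 1) * (2 / ε)) ^ 2 * (a ^ 2 * d ^ 2) ≤ M ^ 2 * (C1 ^ 2 * a ^ 2) := by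
        have hd2a : a ^ 2 * d ^ 2 ≤ C1 ^ 2 * a ^ 2 := by
          linarith [mul_nonneg (sub_nonneg.2 hdsq) (sq_nonneg a)]
        exact mul_le_mul hqM2 hd2a (by positivity) (by positivity)
      rw [hceq]
      calc (2 / r ^ 2) * (((r - 1) * (2 / ε)) ^ 2 * (a ^ 2 * d ^ 2))
          ≤ 2 * (((r - 1) * (2 / ε)) ^ 2 * (a ^ 2 * d ^ 2)) := hle1
      _ ≤ 2 * (M ^ 2 * (C1 ^ 2 * a ^ 2)) := by linarith
      _ = 2 * M ^ 2 * C1 ^ 2 * a ^ 2 := by ring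
  -- assemble
  rw [hR, hSS]
  have hmid : φ ^ 2 * G + 2 * φ * c * P + c ^ 2 - (φ * P + c) ^ 2 = φ ^ 2 * (G - P ^ 2) := by
    ring
  have hGP : 0 ≤ G - P ^ 2 := by linarith
  have h1 : (2 * (r - 1) ^ 2 / r ^ 2) * (φ * P + c) ^ 2
      ≤ 4 * C0 ^ 2 * G + 2 * (2 * M ^ 2 * C1 ^ 2 * a ^ 2) := by
    have e1 : (φ * P + c) ^ 2 ≤ 2 * (φ * P) ^ 2 + 2 * c ^ 2 := by
      linarith [sq_nonneg (φ * P - c)]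
    have e2 : (2 * (r - 1) ^ 2 / r ^ 2) * (φ * P + c) ^ 2
        ≤ (2 * (r - 1) ^ 2 / r ^ 2) * (2 * (φ * P) ^ 2 + 2 * c ^ 2) :=
      mul_le_mul_of_nonneg_left e1 hwr0
    have e3 : (2 * (r - 1) ^ 2 / r ^ 2) * (φ * P) ^ 2 ≤ 2 * C0 ^ 2 * G := by
      have e4 : (φ * P) ^ 2 ≤ C0 ^ 2 * G := by
        rw [mul_pow]; exact mul_le_mul hφsq hPsq (sq_nonneg _) (by positivity)
      calc (2 * (r - 1) ^ 2 / r ^ 2) * (φ * P) ^ 2 ≤ 2 * (φ * P) ^ 2 :=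
          mul_le_mul_of_nonneg_right hwr2 (sq_nonneg _)
      _ ≤ 2 * (C0 ^ 2 * G) := by linarith
      _ = 2 * C0 ^ 2 * G := by ring
    have e5 : (2 * (r - 1) ^ 2 / r ^ 2) * (2 * (φ * P) ^ 2 + 2 * c ^ 2)
        = 2 * ((2 * (r - 1) ^ 2 / r ^ 2) * (φ * P) ^ 2)
          + 2 * ((2 * (r - 1) ^ 2 / r ^ 2) * c ^ 2) := by ring
    rw [e5] at e2
    linarith [hwrc, e2, e3]
  have h3 : φ ^ 2 * (G - P ^ 2) ≤ C0 ^ 2 * G :=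
    mul_le_mul hφsq (by linarith [sq_nonneg P]) hGP (by positivity)
  have h4 : (8 * (r - 1) ^ 2 / r ^ 2) * (φ * a) ^ 2 ≤ 8 * (C0 ^ 2 * a ^ 2) := by
    have e5 : (φ * a) ^ 2 ≤ C0 ^ 2 * a ^ 2 := by
      rw [mul_pow]; exact mul_le_mul_of_nonneg_right hφsq (sq_nonneg _)
    calc (8 * (r - 1) ^ 2 / r ^ 2) * (φ * a) ^ 2 ≤ 8 * (φ * a) ^ 2 :=
        mul_le_mul_of_nonneg_right hwv8 (sq_nonneg _)
    _ ≤ 8 * (C0 ^ 2 * a ^ 2) := by linarith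
  have p1 : 0 ≤ M ^ 2 * C1 ^ 2 * G := by positivity
  have p2 : 0 ≤ C0 ^ 2 * a ^ 2 := by positivity
  have p3 : 0 ≤ C0 ^ 2 * G := by positivity
  have p4 : 0 ≤ M ^ 2 * C1 ^ 2 * a ^ 2 := by positivity
  have hEnn1 : 0 ≤ (2 * (r - 1) ^ 2 / r ^ 2) * (φ * P + c) ^ 2 :=
    mul_nonneg hwr0 (sq_nonneg _)
  have hEnn2 : 0 ≤ φ ^ 2 * (G - P ^ 2) := mul_nonneg (sq_nonneg _) hGP
  have hEnn3 : 0 ≤ (8 * (r - 1) ^ 2 / r ^ 2) * (φ * a) ^ 2 :=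
    mul_nonneg hwv0 (sq_nonneg _)
  have hrew : 2 * (r - 1) ^ 2 / r ^ 2 * (φ * P + c) ^ 2
        + 2 * (φ ^ 2 * G + 2 * φ * c * P + c ^ 2 - (φ * P + c) ^ 2)
        + 8 * (r - 1) ^ 2 / r ^ 2 * (φ * a) ^ 2
      = 2 * (r - 1) ^ 2 / r ^ 2 * (φ * P + c) ^ 2
        + 2 * (φ ^ 2 * (G - P ^ 2))
        + 8 * (r - 1) ^ 2 / r ^ 2 * (φ * a) ^ 2 := by ring
  rw [hrew]
  refine abs_le.mpr ⟨?_, ?_⟩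
  · linarith [hEnn1, hEnn2, hEnn3, p1, p2, p3, p4]
  · linarith [h1, h3, h4, p1, p2, p3, p4]

lemma integrand_meas (Ef : E3 → ℝ) (hEfc : Continuous Ef) (χ : ℝ → ℝ) (hχc : Continuous χ)
    (ε : ℝ) :
    Measurable (fun x : E3 =>
      (2 * (‖x‖ - 1) ^ 2 / ‖x‖ ^ 2) *
          (fderiv ℝ (fun z => χ (2 * (‖z‖ - 1) / ε) * Ef z) x (‖x‖⁻¹ • x)) ^ 2
        + 2 * ((∑ i, (fderiv ℝ (fun z => χ (2 * (‖z‖ - 1) / ε) * Ef z) x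
              (EuclideanSpace.single i (1:ℝ))) ^ 2)
            - (fderiv ℝ (fun z => χ (2 * (‖z‖ - 1) / ε) * Ef z) x (‖x‖⁻¹ • x)) ^ 2)
        + (8 * (‖x‖ - 1) ^ 2 / ‖x‖ ^ 2) * (χ (2 * (‖x‖ - 1) / ε) * Ef x) ^ 2) := by
  have hnorm : Measurable fun x : E3 => ‖x‖ := measurable_norm
  have hf : Measurable (fderiv ℝ (fun z : E3 => χ (2 * (‖z‖ - 1) / ε) * Ef z)) :=
    measurable_fderiv ℝ _
  have hxhat : Measurable fun x : E3 => ‖x‖⁻¹ • x := (hnorm.inv).smul measurable_id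
  have happ : Measurable fun x : E3 =>
      fderiv ℝ (fun z : E3 => χ (2 * (‖z‖ - 1) / ε) * Ef z) x (‖x‖⁻¹ • x) :=
    isBoundedBilinearMap_apply.continuous.measurable.comp (hf.prodMk hxhat)
  have happi : ∀ i : Fin 3, Measurable fun x : E3 =>
      fderiv ℝ (fun z : E3 => χ (2 * (‖z‖ - 1) / ε) * Ef z) x (EuclideanSpace.single i (1:ℝ)) :=
    fun i => measurable_fderiv_apply_const ℝ _ _
  have hw1 : Measurable fun x : E3 => 2 * (‖x‖ - 1) ^ 2 / ‖x‖ ^ 2 :=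
    (measurable_const.mul ((hnorm.sub measurable_const).pow_const 2)).div (hnorm.pow_const 2)
  have hw2 : Measurable fun x : E3 => 8 * (‖x‖ - 1) ^ 2 / ‖x‖ ^ 2 :=
    (measurable_const.mul ((hnorm.sub measurable_const).pow_const 2)).div (hnorm.pow_const 2)
  have hφ : Measurable fun x : E3 => χ (2 * (‖x‖ - 1) / ε) :=
    hχc.measurable.comp ((measurable_const.mul (hnorm.sub measurable_const)).div_const ε)
  refine Measurable.add (Measurable.add ?_ ?_) ?_
  · exact hw1.mul (happ.pow_const 2)
  · exact measurable_const.mul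
      ((Finset.measurable_sum _ fun i _ => (happi i).pow_const 2).sub (happ.pow_const 2))
  · exact hw2.mul ((hφ.mul hEfc.measurable).pow_const 2)

/-- on the single coating annulus `N₁ = {1<|y|<2}` with metric
`g̃₁ = (F₁)_* g_e` (so that `det(g̃₁)^{1/2} g̃₁^{ij}` has radial coefficient
`2(r−1)²/r²`, tangential coefficient `2`, and `det(g̃₁)^{1/2} = 8(r−1)²/r²`),
let `E^f ∈ H¹(N₁)` extend a trace `f` on `Σ = {|y|=1}`, let `χ ∈ C₀^∞(ℝ)` with `χ = 1`
near `0`, and set `w_ε = χ(τ/ε)E^f` where `τ = 2(|y|−1)` is the `g̃₁`-distance to `Σ`.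
Then the weighted energy
`∫_{N₁} det(g̃₁)^{1/2}[g̃₁^{ij}∂_i w_ε ∂_j w_ε + |w_ε|²] dx → 0` as `ε → 0⁺`. -/
theorem cutoff_energy_vanishes
    (Ef : E3 → ℝ) (hEf : Differentiable ℝ Ef)
    (hEfH1 : IntegrableOn
      (fun x => (Ef x) ^ 2 + ∑ i, (fderiv ℝ Ef x (EuclideanSpace.single i (1:ℝ))) ^ 2)
      {x : E3 | 1 < ‖x‖ ∧ ‖x‖ < 2} volume)
    (χ : ℝ → ℝ) (hχ : ContDiff ℝ (⊤ : ℕ∞) χ) (hχc : HasCompactSupport χ)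
    (hχ1 : ∃ δ > 0, ∀ t : ℝ, |t| < δ → χ t = 1) :
    Tendsto
      (fun ε : ℝ =>
        ∫ x in {x : E3 | 1 < ‖x‖ ∧ ‖x‖ < 2},
          (2 * (‖x‖ - 1) ^ 2 / ‖x‖ ^ 2) *
              (fderiv ℝ (fun z => χ (2 * (‖z‖ - 1) / ε) * Ef z) x (‖x‖⁻¹ • x)) ^ 2
            + 2 * ((∑ i, (fderiv ℝ (fun z => χ (2 * (‖z‖ - 1) / ε) * Ef z) x
                    (EuclideanSpace.single i (1:ℝ))) ^ 2)
                - (fderiv ℝ (fun z => χ (2 * (‖z‖ - 1) / ε) * Ef z) x (‖x‖⁻¹ • x)) ^ 2)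
            + (8 * (‖x‖ - 1) ^ 2 / ‖x‖ ^ 2) * (χ (2 * (‖x‖ - 1) / ε) * Ef x) ^ 2)
      (nhdsWithin 0 (Set.Ioi 0)) (nhds 0) := by
  obtain ⟨C0, hC0'⟩ := hχc.exists_bound_of_continuous hχ.continuous
  have hC0 : ∀ t, |χ t| ≤ C0 := by simpa [Real.norm_eq_abs] using hC0'
  have hχ'cont : Continuous (deriv χ) := hχ.continuous_deriv (by simp)
  obtain ⟨C1, hC1'⟩ := (hχc.deriv).exists_bound_of_continuous hχ'cont
  have hC1 : ∀ t, |deriv χ t| ≤ C1 := by simpa [Real.norm_eq_abs] using hC1'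
  obtain ⟨M₀, hM₀⟩ := (Metric.isBounded_iff_subset_closedBall 0).1 hχc.isBounded
  set M : ℝ := max M₀ 0 + 1 with hMdef
  have hM : 0 < M := by positivity
  have hout : ∀ s : ℝ, max M₀ 0 < |s| → χ s = 0 := by
    intro s hs
    apply image_eq_zero_of_notMem_tsupport
    intro hmem
    have h := hM₀ hmem
    rw [Metric.mem_closedBall, dist_zero_right, Real.norm_eq_abs] at h
    have h2 := le_max_left M₀ 0
    linarith [le_max_left M₀ 0]
  have hχz : ∀ t : ℝ, M ≤ |t| → χ t = 0 := fun t ht => hout t (by rw [hMdef] at ht; linarith)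
  have hMz : ∀ t : ℝ, M ≤ |t| → deriv χ t = 0 := by
    intro t ht
    have hev : χ =ᶠ[nhds t] fun _ => (0:ℝ) := by
      have hopen : IsOpen {s : ℝ | max M₀ 0 < |s|} :=
        isOpen_lt continuous_const continuous_abs
      have hmem : t ∈ {s : ℝ | max M₀ 0 < |s|} := by
        simp only [Set.mem_setOf_eq]; rw [hMdef] at ht; linarith
      filter_upwards [hopen.mem_nhds hmem] with s hs
      exact hout s hs
    rw [hev.deriv_eq]
    simp
  have hSmeas : MeasurableSet {x : E3 | 1 < ‖x‖ ∧ ‖x‖ < 2} := by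
    have h : {x : E3 | 1 < ‖x‖ ∧ ‖x‖ < 2} = {x : E3 | 1 < ‖x‖} ∩ {x : E3 | ‖x‖ < 2} := rfl
    rw [h]
    exact (measurableSet_lt measurable_const measurable_norm).inter
      (measurableSet_lt measurable_norm measurable_const)
  have hmain := tendsto_integral_filter_of_dominated_convergence
    (μ := volume.restrict {x : E3 | 1 < ‖x‖ ∧ ‖x‖ < 2})
    (l := nhdsWithin (0:ℝ) (Set.Ioi 0))
    (F := fun (ε : ℝ) (x : E3) =>
      (2 * (‖x‖ - 1) ^ 2 / ‖x‖ ^ 2) *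
          (fderiv ℝ (fun z => χ (2 * (‖z‖ - 1) / ε) * Ef z) x (‖x‖⁻¹ • x)) ^ 2
        + 2 * ((∑ i, (fderiv ℝ (fun z => χ (2 * (‖z‖ - 1) / ε) * Ef z) x
                (EuclideanSpace.single i (1:ℝ))) ^ 2)
            - (fderiv ℝ (fun z => χ (2 * (‖z‖ - 1) / ε) * Ef z) x (‖x‖⁻¹ • x)) ^ 2)
        + (8 * (‖x‖ - 1) ^ 2 / ‖x‖ ^ 2) * (χ (2 * (‖x‖ - 1) / ε) * Ef x) ^ 2)
    (f := fun _ : E3 => (0:ℝ))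
    (bound := fun x : E3 => (4 * M ^ 2 * C1 ^ 2 + 14 * C0 ^ 2) *
      ((Ef x) ^ 2 + ∑ i, (fderiv ℝ Ef x (EuclideanSpace.single i (1:ℝ))) ^ 2))
    (Filter.Eventually.of_forall fun ε =>
      (integrand_meas Ef hEf.continuous χ hχ.continuous ε).aestronglyMeasurable)
    (by
      filter_upwards [self_mem_nhdsWithin] with ε hε
      rw [ae_restrict_iff' hSmeas]
      refine Filter.Eventually.of_forall fun x hx => ?_
      rw [Real.norm_eq_abs]
      exact point_bound Ef hEf χ hχ C0 C1 M hM hC0 hC1 hMz ε hε x hx.1 hx.2)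
    (hEfH1.const_mul _)
    (by
      rw [ae_restrict_iff' hSmeas]
      refine Filter.Eventually.of_forall fun x hx => ?_
      obtain ⟨hx1, hx2⟩ := hx
      have hδ : 0 < (‖x‖ - 1) / M := div_pos (by linarith) hM
      have hev : ∀ᶠ ε in nhdsWithin (0:ℝ) (Set.Ioi 0),
          ((2 * (‖x‖ - 1) ^ 2 / ‖x‖ ^ 2) *
            (fderiv ℝ (fun z => χ (2 * (‖z‖ - 1) / ε) * Ef z) x (‖x‖⁻¹ • x)) ^ 2
          + 2 * ((∑ i, (fderiv ℝ (fun z => χ (2 * (‖z‖ - 1) / ε) * Ef z) x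
                  (EuclideanSpace.single i (1:ℝ))) ^ 2)
              - (fderiv ℝ (fun z => χ (2 * (‖z‖ - 1) / ε) * Ef z) x (‖x‖⁻¹ • x)) ^ 2)
          + (8 * (‖x‖ - 1) ^ 2 / ‖x‖ ^ 2) * (χ (2 * (‖x‖ - 1) / ε) * Ef x) ^ 2) = 0 := by
        filter_upwards [Ioc_mem_nhdsGT hδ] with ε hεm
        obtain ⟨hε0, hεle⟩ := hεm
        have hMε : M * ε ≤ ‖x‖ - 1 := by
          have h := (le_div_iff₀ hM).1 hεle
          linarith
        have hzero : ∀ z : E3, (1 + ‖x‖) / 2 < ‖z‖ → χ (2 * (‖z‖ - 1) / ε) = 0 := by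
          intro z hz
          apply hχz
          rw [abs_of_nonneg (div_nonneg (by linarith) hε0.le), le_div_iff₀ hε0]
          linarith
        have heq : (fun z : E3 => χ (2 * (‖z‖ - 1) / ε) * Ef z) =ᶠ[nhds x]
            fun _ => (0:ℝ) := by
          have hopen : IsOpen {z : E3 | (1 + ‖x‖) / 2 < ‖z‖} :=
            isOpen_lt continuous_const continuous_norm
          have hmem : x ∈ {z : E3 | (1 + ‖x‖) / 2 < ‖z‖} := by
            simp only [Set.mem_setOf_eq]; linarith
          filter_upwards [hopen.mem_nhds hmem] with z hz
          rw [hzero z hz, zero_mul]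
        have hfd : fderiv ℝ (fun z : E3 => χ (2 * (‖z‖ - 1) / ε) * Ef z) x = 0 := by
          rw [heq.fderiv_eq]
          exact fderiv_const_apply 0
        have hχx : χ (2 * (‖x‖ - 1) / ε) = 0 := hzero x (by linarith)
        rw [hfd, hχx]
        simp
      exact Tendsto.congr' (hev.mono fun ε h => h.symm) tendsto_const_nhds)
  simpa using hmain
end
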